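/- Every subgroup of PGL(2,ℤ) of order 6 is conjugate in PGL(2,ℤ) to the subgroup G₆ generated by [U] and [S]; that is, for every subgroup H of PGL(2,ℤ) with exactly 6 elements there exists g ∈ PGL(2,ℤ) such that g H g⁻¹ = G₆. -/
import Mathlib


open Matrix

abbrev GL2Z := GL (Fin 2) ℤ

/-- PGL(2,ℤ): the quotient of GL(2,ℤ) by its center {I, -I}. -/
abbrev PGL2Z := GL2Z ⧸ Subgroup.center GL2Z

/-- The image of a matrix in PGL(2,ℤ). -/
def cls (M : GL2Z) : PGL2Z := QuotientGroup.mk M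

def Smat : GL2Z := ⟨!![0,1;1,0], !![0,1;1,0], by decide, by decide⟩
def Nmat : GL2Z := ⟨!![-1,0;0,1], !![-1,0;0,1], by decide, by decide⟩
def Tmat : GL2Z := ⟨!![0,-1;1,0], !![0,1;-1,0], by decide, by decide⟩
def Umat : GL2Z := ⟨!![0,-1;1,1], !![1,1;-1,0], by decide, by decide⟩

/-! ### Auxiliary lemmas -/

theorem mat_eq_iff {α : Type*} (a b c d e f g h : α) :
    !![a,b;c,d] = !![e,f;g,h] ↔ a = e ∧ b = f ∧ c = g ∧ d = h := by
  constructor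
  · intro H
    exact ⟨congrFun (congrFun H 0) 0, congrFun (congrFun H 0) 1,
      congrFun (congrFun H 1) 0, congrFun (congrFun H 1) 1⟩
  · rintro ⟨rfl, rfl, rfl, rfl⟩; rfl

theorem val_one : (1 : GL2Z).val = !![1,0;0,1] := by decide

theorem neg_fin_two (a b c d : ℤ) : -(!![a,b;c,d]) = !![-a,-b;-c,-d] := by
  ext i j; fin_cases i <;> fin_cases j <;> simp

theorem det_pm (M : GL2Z) : M.val.det = 1 ∨ M.val.det = -1 :=
  Int.isUnit_iff.mp ((Matrix.isUnit_iff_isUnit_det _).mp M.isUnit)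

theorem eta (M : GL2Z) : ∃ a b c d : ℤ, M.val = !![a,b;c,d] :=
  ⟨_, _, _, _, (Matrix.etaExpand_eq M.val).symm⟩

def E1 : GL2Z := ⟨!![1,1;0,1], !![1,-1;0,1], by decide, by decide⟩
def E2 : GL2Z := ⟨!![1,0;1,1], !![1,0;-1,1], by decide, by decide⟩

theorem val_negone : (-1 : GL2Z).val = !![-1,0;0,-1] := by
  rw [Units.val_neg, val_one, neg_fin_two]; norm_num

theorem center_eq (M : GL2Z) : M ∈ Subgroup.center GL2Z ↔ M = 1 ∨ M = -1 := by
  constructor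
  · intro h
    rw [Subgroup.mem_center_iff] at h
    obtain ⟨a, b, c, d, hM⟩ := eta M
    have h1 := congrArg Units.val (h E1)
    have h2 := congrArg Units.val (h E2)
    rw [Units.val_mul, Units.val_mul, hM,
      show E1.val = !![1,1;0,1] from rfl, Matrix.mul_fin_two, Matrix.mul_fin_two,
      mat_eq_iff] at h1
    rw [Units.val_mul, Units.val_mul, hM,
      show E2.val = !![1,0;1,1] from rfl, Matrix.mul_fin_two, Matrix.mul_fin_two,
      mat_eq_iff] at h2
    obtain ⟨e1, e2, e3, e4⟩ := h1
    obtain ⟨f1, f2, f3, f4⟩ := h2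
    have hb : b = 0 := by linarith
    have hc : c = 0 := by linarith
    have had : a = d := by linarith
    have hdet := det_pm M
    rw [hM, Matrix.det_fin_two_of, hb, hc, had] at hdet
    rcases hdet with h | h
    · have : d = 1 ∨ d = -1 := by
        have : (d-1)*(d+1) = 0 := by ring_nf; linarith
        rcases mul_eq_zero.mp this with h' | h'
        · left; linarith
        · right; linarith
      rcases this with h' | h'
      · left; exact Units.ext (by rw [hM, val_one, hb, hc, had, h'])
      · right; exact Units.ext (by rw [hM, val_negone, hb, hc, had, h'])
    · exfalso; nlinarith [sq_nonneg d]
  · rintro (rfl | rfl)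
    · exact (Subgroup.center GL2Z).one_mem
    · rw [Subgroup.mem_center_iff]; intro g; simp

theorem cls_mul (M N : GL2Z) : cls (M * N) = cls M * cls N := rfl
theorem cls_inv (M : GL2Z) : cls M⁻¹ = (cls M)⁻¹ := rfl
theorem cls_pow (M : GL2Z) (n : ℕ) : cls (M ^ n) = (cls M) ^ n := by
  induction n with
  | zero => rfl
  | succ n ih => rw [pow_succ, pow_succ, ← ih]; rfl

theorem cls_eq_one (M : GL2Z) : cls M = 1 ↔ M = 1 ∨ M = -1 := by
  rw [cls, QuotientGroup.eq_one_iff, center_eq]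

theorem cls_neg (M : GL2Z) : cls (-M) = cls M := by
  have : -M = M * (-1) := by simp
  rw [this, cls_mul, (cls_eq_one (-1)).mpr (Or.inr rfl), mul_one]

theorem cls_eq_iff (M N : GL2Z) : cls M = cls N ↔ M = N ∨ M = -N := by
  constructor
  · intro h
    have : cls (N⁻¹ * M) = 1 := by
      rw [cls_mul, h, cls_inv, inv_mul_cancel]
    rcases (cls_eq_one _).mp this with h' | h'
    · left; calc M = N * (N⁻¹ * M) := by group
        _ = N := by rw [h', mul_one]
    · right; calc M = N * (N⁻¹ * M) := by group
        _ = N * (-1) := by rw [h']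
        _ = -N := by simp
  · rintro (rfl | rfl)
    · rfl
    · exact cls_neg N

/-! ### Trace and determinant of order-3 elements -/

theorem order_three_trace_det (M : GL2Z) (h3 : M ^ 3 = 1) (h1 : M ≠ 1)
    {a b c d : ℤ} (hM : M.val = !![a,b;c,d]) :
    a + d = -1 ∧ a * d - b * c = 1 := by
  have hcube : M.val * M.val * M.val = !![(1:ℤ),0;0,1] := by
    rw [← val_one, ← h3]
    rw [show (M^3).val = M.val * M.val * M.val by
      rw [pow_succ, pow_succ, pow_one, Units.val_mul, Units.val_mul]]
  rw [hM, Matrix.mul_fin_two, Matrix.mul_fin_two, mat_eq_iff] at hcube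
  obtain ⟨e00, e01, e10, e11⟩ := hcube
  set t := a + d with ht
  set δ := a * d - b * c with hδ
  have h01 : (t^2 - δ) * b = 0 := by linear_combination e01
  have h10 : (t^2 - δ) * c = 0 := by linear_combination e10
  have h00 : (t^2 - δ) * a - t * δ = 1 := by linear_combination e00
  have h11 : (t^2 - δ) * d - t * δ = 1 := by linear_combination e11
  by_cases hE : t^2 - δ = 0
  · have htδ : -(t * δ) = 1 := by linear_combination h00 - a * hE
    have hδt : δ = t^2 := by linarith
    have ht3 : t^3 = -1 := by nlinarith
    have htm : t = -1 := by nlinarith [sq_nonneg (t - 1), sq_nonneg (t + 1)]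
    constructor
    · exact htm
    · show δ = 1
      rw [hδt, htm]; norm_num
  · exfalso
    have hb : b = 0 := by
      rcases mul_eq_zero.mp h01 with h | h
      · exact absurd h hE
      · exact h
    have hc : c = 0 := by
      rcases mul_eq_zero.mp h10 with h | h
      · exact absurd h hE
      · exact h
    rw [hb, hc] at e00 e11
    have ha1 : a = 1 := by nlinarith [sq_nonneg (a - 1), sq_nonneg (a + 1), sq_nonneg a]
    have hd1 : d = 1 := by nlinarith [sq_nonneg (d - 1), sq_nonneg (d + 1), sq_nonneg d]
    exact h1 (Units.ext (by rw [hM, val_one, ha1, hd1, hb, hc]))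

/-! ### The descent: every order-3 element is conjugate to C = [[0,-1],[1,-1]] -/

def Cgl : GL2Z := ⟨!![0,-1;1,-1], !![-1,1;-1,0], by decide, by decide⟩

def Tgl (m : ℤ) : GL2Z :=
  ⟨!![1,m;0,1], !![1,-m;0,1],
   by rw [Matrix.mul_fin_two, show (1 : Matrix (Fin 2) (Fin 2) ℤ) = !![1,0;0,1] from Matrix.one_fin_two, mat_eq_iff]; refine ⟨by ring, by ring, by ring, by ring⟩,
   by rw [Matrix.mul_fin_two, show (1 : Matrix (Fin 2) (Fin 2) ℤ) = !![1,0;0,1] from Matrix.one_fin_two, mat_eq_iff]; refine ⟨by ring, by ring, by ring, by ring⟩⟩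

def Pgl (m : ℤ) : GL2Z :=
  ⟨!![-1,m;0,1], !![-1,m;0,1],
   by rw [Matrix.mul_fin_two, show (1 : Matrix (Fin 2) (Fin 2) ℤ) = !![1,0;0,1] from Matrix.one_fin_two, mat_eq_iff]; refine ⟨by ring, by ring, by ring, by ring⟩,
   by rw [Matrix.mul_fin_two, show (1 : Matrix (Fin 2) (Fin 2) ℤ) = !![1,0;0,1] from Matrix.one_fin_two, mat_eq_iff]; refine ⟨by ring, by ring, by ring, by ring⟩⟩

theorem conj_trans (M h : GL2Z) (H : ∃ g : GL2Z, g * (h * M * h⁻¹) * g⁻¹ = Cgl) :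
    ∃ g : GL2Z, g * M * g⁻¹ = Cgl := by
  obtain ⟨g, hg⟩ := H
  exact ⟨g * h, by rw [← hg]; group⟩

theorem inv_val (g : GL2Z) : (g⁻¹).val = g.inv := rfl

theorem descent : ∀ k : ℕ, ∀ M : GL2Z, ∀ a b c d : ℤ, M.val = !![a,b;c,d] →
    c.natAbs ≤ k → a + d = -1 → a * d - b * c = 1 →
    ∃ g : GL2Z, g * M * g⁻¹ = Cgl := by
  intro k
  induction k with
  | zero =>
    intro M a b c d hM hc htr hdet
    exfalso
    have hc0 : c = 0 := by omega
    rw [hc0] at hdet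
    nlinarith [sq_nonneg (a - d), sq_nonneg (a + d)]
  | succ k ih =>
    intro M a b c d hM hc htr hdet
    rcases Nat.lt_or_ge c.natAbs (k+1) with hlt | hge
    · exact ih M a b c d hM (by omega) htr hdet
    have hceq : c.natAbs = k + 1 := le_antisymm hc hge
    rcases Nat.eq_or_lt_of_le (show 1 ≤ c.natAbs by omega) with h1 | h2
    · have : c = 1 ∨ c = -1 := by omega
      rcases this with rfl | rfl
      · refine ⟨Tgl (-a), ?_⟩
        apply Units.ext
        rw [Units.val_mul, Units.val_mul, inv_val, hM,
          show (Tgl (-a)).val = !![1,-a;0,1] from rfl,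
          show (Tgl (-a)).inv = !![1,-(-a);0,1] from rfl,
          show Cgl.val = !![0,-1;1,-1] from rfl,
          Matrix.mul_fin_two, Matrix.mul_fin_two, mat_eq_iff]
        refine ⟨by ring, by linear_combination -hdet, by ring, by linear_combination htr⟩
      · refine ⟨Pgl (-a), ?_⟩
        apply Units.ext
        rw [Units.val_mul, Units.val_mul, inv_val, hM,
          show (Pgl (-a)).val = !![-1,-a;0,1] from rfl,
          show (Pgl (-a)).inv = !![-1,-a;0,1] from rfl,
          show Cgl.val = !![0,-1;1,-1] from rfl,
          Matrix.mul_fin_two, Matrix.mul_fin_two, mat_eq_iff]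
        refine ⟨by ring, by linear_combination -hdet, by ring, by linear_combination htr⟩
    · -- |c| ≥ 2 : reduce
      have hc0 : c ≠ 0 := by omega
      have hcabs : (1:ℤ) < |c| := by
        rw [Int.abs_eq_natAbs]; exact_mod_cast h2
      obtain ⟨s, hs1, hsc⟩ : ∃ s : ℤ, (s = 1 ∨ s = -1) ∧ |c| = s * c := by
        rcases abs_choice c with h | h
        · exact ⟨1, Or.inl rfl, by linarith⟩
        · exact ⟨-1, Or.inr rfl, by linarith⟩
      obtain ⟨m, hma⟩ : ∃ m : ℤ, a + m * c = a % |c| :=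
        ⟨-(a / |c|) * s, by rw [Int.emod_def]; rw [hsc]; ring⟩
      have ha'0 : 0 ≤ a + m * c := by rw [hma]; exact Int.emod_nonneg a (by positivity)
      have ha'lt : a + m * c < |c| := by rw [hma]; exact Int.emod_lt_of_pos a (by linarith)
      apply conj_trans M (Smat * Tgl m)
      have hMval : ((Smat * Tgl m) * M * (Smat * Tgl m)⁻¹).val
          = !![d - m*c, c; b + m*(d-a) - m^2*c, a + m*c] := by
        simp only [_root_.mul_inv_rev, Units.val_mul, inv_val]
        rw [hM,
          show Smat.val = !![0,1;1,0] from rfl,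
          show (Tgl m).val = !![1,m;0,1] from rfl,
          show (Tgl m).inv = !![1,-m;0,1] from rfl,
          show Smat.inv = !![0,1;1,0] from rfl,
          Matrix.mul_fin_two, Matrix.mul_fin_two, Matrix.mul_fin_two, Matrix.mul_fin_two,
          mat_eq_iff]
        refine ⟨by ring, by ring, by ring, by ring⟩
      have key : (b + m*(d-a) - m^2*c) * c = -((a+m*c)^2 + (a+m*c) + 1) := by
        linear_combination -hdet + (a + m*c) * htr
      have habs : |b + m*(d-a) - m^2*c| * |c| = (a+m*c)^2 + (a+m*c) + 1 := by
        rw [← abs_mul, key, abs_neg, abs_of_nonneg (by nlinarith)]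
      have hblt : |b + m*(d-a) - m^2*c| < |c| := by
        have h1 : |b + m*(d-a) - m^2*c| * |c| < |c| * |c| := by nlinarith
        exact lt_of_mul_lt_mul_right h1 (by positivity)
      have hbnat : (b + m*(d-a) - m^2*c).natAbs < c.natAbs := by
        rw [Int.abs_eq_natAbs, Int.abs_eq_natAbs] at hblt
        exact_mod_cast hblt
      exact ih _ (d - m*c) c (b + m*(d-a) - m^2*c) (a + m*c) hMval (by omega)
        (by linear_combination htr) (by linear_combination hdet)

/-! ### Classification of (anti-)commuting and inverting elements for U -/

theorem val_U : Umat.val = !![0,-1;1,1] := rfl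
theorem val_negU : (-Umat).val = !![0,1;-1,-1] := by
  rw [Units.val_neg, val_U, neg_fin_two]; norm_num
theorem val_U2 : (Umat^2).val = !![-1,-1;1,0] := by
  rw [sq, Units.val_mul, val_U, Matrix.mul_fin_two]; norm_num
theorem val_negU2 : (-(Umat^2)).val = !![1,1;-1,0] := by
  rw [Units.val_neg, val_U2, neg_fin_two]; norm_num
theorem val_S : Smat.val = !![0,1;1,0] := rfl
theorem val_negS : (-Smat).val = !![0,-1;-1,0] := by
  rw [Units.val_neg, val_S, neg_fin_two]; norm_num
theorem val_SU : (Smat*Umat).val = !![1,1;0,-1] := by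
  rw [Units.val_mul, val_S, val_U, Matrix.mul_fin_two]; norm_num
theorem val_negSU : (-(Smat*Umat)).val = !![-1,-1;0,1] := by
  rw [Units.val_neg, val_SU, neg_fin_two]; norm_num
theorem val_US : (Umat*Smat).val = !![-1,0;1,1] := by
  rw [Units.val_mul, val_S, val_U, Matrix.mul_fin_two]; norm_num
theorem val_negUS : (-(Umat*Smat)).val = !![1,0;-1,-1] := by
  rw [Units.val_neg, val_US, neg_fin_two]; norm_num

theorem hexagon {a b : ℤ} (h : a^2 - a*b + b^2 = 1) :
    (a = 1 ∧ b = 0) ∨ (a = -1 ∧ b = 0) ∨ (a = 0 ∧ b = 1) ∨ (a = 0 ∧ b = -1) ∨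
    (a = 1 ∧ b = 1) ∨ (a = -1 ∧ b = -1) := by
  have h4 : (2*a - b)^2 + 3*b^2 = 4 := by linear_combination 4*h
  have hb2 : b^2 ≤ 1 := by nlinarith [sq_nonneg (2*a - b)]
  have hb : b = -1 ∨ b = 0 ∨ b = 1 := by
    have h1 : -1 ≤ b := by nlinarith
    have h2 : b ≤ 1 := by nlinarith
    omega
  rcases hb with rfl | rfl | rfl
  · rcases mul_eq_zero.mp (show a * (a+1) = 0 by linear_combination h) with h' | h'
    · right; right; right; left; exact ⟨h', rfl⟩
    · right; right; right; right; right; exact ⟨by linarith, rfl⟩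
  · rcases mul_eq_zero.mp (show (a-1)*(a+1) = 0 by linear_combination h) with h' | h'
    · left; exact ⟨by linarith, rfl⟩
    · right; left; exact ⟨by linarith, rfl⟩
  · rcases mul_eq_zero.mp (show a * (a - 1) = 0 by linear_combination h) with h' | h'
    · right; right; left; exact ⟨h', rfl⟩
    · right; right; right; right; left; exact ⟨by linarith, rfl⟩

theorem comm_case (MT : GL2Z) (h : MT.val * Umat.val = Umat.val * MT.val) :
    MT = 1 ∨ MT = -1 ∨ MT = Umat ∨ MT = -Umat ∨ MT = Umat^2 ∨ MT = -(Umat^2) := by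
  obtain ⟨a, b, c, d, hM⟩ := eta MT
  rw [hM, val_U, Matrix.mul_fin_two, Matrix.mul_fin_two, mat_eq_iff] at h
  obtain ⟨e1, e2, e3, e4⟩ := h
  have hc : c = -b := by linarith
  have hd : d = a - b := by linarith
  have hdet := det_pm MT
  rw [hM, Matrix.det_fin_two_of, hc, hd] at hdet
  have hq : a^2 - a*b + b^2 = 1 := by
    rcases hdet with h' | h'
    · linear_combination h'
    · exfalso; nlinarith [sq_nonneg (2*a - b), sq_nonneg b]
  rcases hexagon hq with ⟨rfl, rfl⟩ | ⟨rfl, rfl⟩ | ⟨rfl, rfl⟩ | ⟨rfl, rfl⟩ | ⟨rfl, rfl⟩ | ⟨rfl, rfl⟩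
  · exact Or.inl (Units.ext (by rw [hM, hc, hd, val_one]; norm_num))
  · exact Or.inr (Or.inl (Units.ext (by rw [hM, hc, hd, val_negone]; norm_num)))
  · exact Or.inr (Or.inr (Or.inr (Or.inl (Units.ext (by rw [hM, hc, hd, val_negU]; norm_num)))))
  · exact Or.inr (Or.inr (Or.inl (Units.ext (by rw [hM, hc, hd, val_U]; norm_num))))
  · exact Or.inr (Or.inr (Or.inr (Or.inr (Or.inr (Units.ext (by rw [hM, hc, hd, val_negU2]; norm_num))))))
  · exact Or.inr (Or.inr (Or.inr (Or.inr (Or.inl (Units.ext (by rw [hM, hc, hd, val_U2]; norm_num))))))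

theorem anticomm_case (MT : GL2Z) (h : MT.val * Umat.val = -(Umat.val * MT.val)) : False := by
  obtain ⟨a, b, c, d, hM⟩ := eta MT
  rw [hM, val_U, Matrix.mul_fin_two, Matrix.mul_fin_two, neg_fin_two, mat_eq_iff] at h
  obtain ⟨e1, e2, e3, e4⟩ := h
  have hb : b = 0 := by linarith
  have hc : c = 0 := by linarith
  have ha : a = 0 := by linarith
  have hd : d = 0 := by linarith
  have hdet := det_pm MT
  rw [hM, Matrix.det_fin_two_of, ha, hb, hc, hd] at hdet
  rcases hdet with h' | h' <;> norm_num at h'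

theorem invert_plus_case (MT : GL2Z) (h : MT.val * Umat.val = (Umat^2).val * MT.val) : False := by
  obtain ⟨a, b, c, d, hM⟩ := eta MT
  rw [hM, val_U, val_U2, Matrix.mul_fin_two, Matrix.mul_fin_two, mat_eq_iff] at h
  obtain ⟨e1, e2, e3, e4⟩ := h
  have hd : d = a := by linarith
  have hb : b = 0 := by linarith
  have hc : c = -a := by linarith
  have ha : a = 0 := by linarith
  have hdet := det_pm MT
  rw [hM, Matrix.det_fin_two_of, hd, hb, hc, ha] at hdet
  rcases hdet with h' | h' <;> norm_num at h'

theorem invert_minus_case (MT : GL2Z) (h : MT.val * Umat.val = -((Umat^2).val * MT.val)) :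
    MT = Smat ∨ MT = -Smat ∨ MT = Smat*Umat ∨ MT = -(Smat*Umat) ∨
    MT = Umat*Smat ∨ MT = -(Umat*Smat) := by
  obtain ⟨a, b, c, d, hM⟩ := eta MT
  rw [hM, val_U, val_U2, Matrix.mul_fin_two, Matrix.mul_fin_two, neg_fin_two, mat_eq_iff] at h
  obtain ⟨e1, e2, e3, e4⟩ := h
  have hb : b = a + c := by linarith
  have hd : d = -a := by linarith
  have hdet := det_pm MT
  rw [hM, Matrix.det_fin_two_of, hb, hd] at hdet
  have hq : a^2 - a*(-c) + (-c)^2 = 1 := by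
    rcases hdet with h' | h'
    · exfalso; nlinarith [sq_nonneg (2*a + c), sq_nonneg c]
    · linear_combination -h'
  rcases hexagon hq with ⟨ha, hc⟩ | ⟨ha, hc⟩ | ⟨ha, hc⟩ | ⟨ha, hc⟩ | ⟨ha, hc⟩ | ⟨ha, hc⟩
  · have hc' : c = 0 := by linarith
    exact Or.inr (Or.inr (Or.inl (Units.ext (by rw [hM, hb, hd, ha, hc', val_SU]; norm_num))))
  · have hc' : c = 0 := by linarith
    exact Or.inr (Or.inr (Or.inr (Or.inl (Units.ext (by rw [hM, hb, hd, ha, hc', val_negSU]; norm_num)))))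
  · have hc' : c = -1 := by linarith
    exact Or.inr (Or.inl (Units.ext (by rw [hM, hb, hd, ha, hc', val_negS]; norm_num)))
  · have hc' : c = 1 := by linarith
    exact Or.inl (Units.ext (by rw [hM, hb, hd, ha, hc', val_S]; norm_num))
  · have hc' : c = -1 := by linarith
    exact Or.inr (Or.inr (Or.inr (Or.inr (Or.inr (Units.ext (by rw [hM, hb, hd, ha, hc', val_negUS]; norm_num))))))
  · have hc' : c = 1 := by linarith
    exact Or.inr (Or.inr (Or.inr (Or.inr (Or.inl (Units.ext (by rw [hM, hb, hd, ha, hc', val_US]; norm_num))))))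

/-! ### Group-theoretic helpers -/

theorem index_two_normal {G : Type*} [Group G] (P : Subgroup G) (h : P.index = 2) : P.Normal := by
  constructor
  intro p hp g
  have key := Subgroup.mul_mem_iff_of_index_two h (a := g * p) (b := g⁻¹)
  have key2 := Subgroup.mul_mem_iff_of_index_two h (a := g) (b := p)
  rw [key, key2, P.inv_mem_iff]
  tauto

theorem U3 : Umat^3 = -1 := by
  apply Units.ext
  rw [show (Umat^3).val = Umat.val * Umat.val * Umat.val by
    rw [pow_succ, pow_succ, pow_one, Units.val_mul, Units.val_mul],
    val_U, val_negone, Matrix.mul_fin_two, Matrix.mul_fin_two]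
  norm_num

theorem S2 : Smat^2 = 1 := by
  apply Units.ext
  rw [sq, Units.val_mul, val_S, val_one, Matrix.mul_fin_two]
  norm_num

theorem clsU_cube : (cls Umat)^3 = 1 := by
  rw [← cls_pow, U3]
  exact (cls_eq_one _).mpr (Or.inr rfl)

theorem clsU_ne_one : cls Umat ≠ 1 := by
  intro h
  rcases (cls_eq_one Umat).mp h with h1 | h1 <;>
    exact absurd (congrArg Units.val h1) (by rw [val_U]; first
      | (rw [val_one]; decide)
      | (rw [val_negone]; decide))

theorem clsU_order : orderOf (cls Umat) = 3 :=
  orderOf_eq_prime (hp := ⟨by norm_num⟩) clsU_cube clsU_ne_one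

theorem clsS_sq : (cls Smat)^2 = 1 := by
  rw [← cls_pow, S2]; rfl

theorem clsS_ne_one : cls Smat ≠ 1 := by
  intro h
  rcases (cls_eq_one Smat).mp h with h1 | h1 <;>
    exact absurd (congrArg Units.val h1) (by rw [val_S]; first
      | (rw [val_one]; decide)
      | (rw [val_negone]; decide))

theorem clsS_order : orderOf (cls Smat) = 2 :=
  orderOf_eq_prime (hp := ⟨by norm_num⟩) clsS_sq clsS_ne_one

/-- Every subgroup of PGL(2,ℤ) of order 6 is conjugate to G₆ = ⟨[U],[S]⟩. -/
theorem stmt_4 (H : Subgroup PGL2Z) (hH : Nat.card H = 6) :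
    ∃ g : PGL2Z,
      Subgroup.map (MulAut.conj g).toMonoidHom H = Subgroup.closure {cls Umat, cls Smat} := by
  haveI hfin : Finite H := Nat.finite_of_card_ne_zero (by omega)
  haveI : Fintype H := Fintype.ofFinite H
  have hcard : Fintype.card H = 6 := by rw [← Nat.card_eq_fintype_card, hH]
  haveI : Fact (Nat.Prime 2) := ⟨by norm_num⟩
  haveI : Fact (Nat.Prime 3) := ⟨by norm_num⟩
  obtain ⟨u0, hu0⟩ := exists_prime_orderOf_dvd_card (G := H) 3 (by rw [hcard]; norm_num)
  obtain ⟨s0, hs0⟩ := exists_prime_orderOf_dvd_card (G := H) 2 (by rw [hcard]; norm_num)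
  set u : PGL2Z := (u0 : PGL2Z) with hu_def
  have huord : orderOf u = 3 := by rw [hu_def, Subgroup.orderOf_coe, hu0]
  have hune : u ≠ 1 := by
    intro h; rw [h, orderOf_one] at huord; norm_num at huord
  -- lift u to a matrix of order 3
  obtain ⟨M0, hM0⟩ : ∃ M0 : GL2Z, cls M0 = u := QuotientGroup.mk_surjective u
  have hu3 : u ^ 3 = 1 := by rw [← huord]; exact pow_orderOf_eq_one u
  have hM03 : M0^3 = 1 ∨ M0^3 = -1 := by
    apply (cls_eq_one _).mp
    rw [cls_pow, hM0, hu3]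
  obtain ⟨M, hMcls, hM3, hMne⟩ : ∃ M : GL2Z, cls M = u ∧ M^3 = 1 ∧ M ≠ 1 := by
    rcases hM03 with h | h
    · refine ⟨M0, hM0, h, ?_⟩
      rintro rfl
      exact hune (by rw [← hM0]; rfl)
    · refine ⟨-M0, by rw [cls_neg]; exact hM0, ?_, ?_⟩
      · rw [Odd.neg_pow ⟨1, by norm_num⟩, h, neg_neg]
      · rintro h1
        apply hune
        rw [← hM0, ← cls_neg M0, h1]; rfl
  obtain ⟨a, b, c, d, hM⟩ := eta M
  obtain ⟨htr, hdet⟩ := order_three_trace_det M hM3 hMne hM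
  obtain ⟨g0, hg0⟩ := descent c.natAbs M a b c d hM le_rfl htr hdet
  obtain ⟨g1, hg1⟩ := descent 1 (-Umat) 0 1 (-1) (-1) val_negU (by norm_num) (by norm_num) (by norm_num)
  set x : PGL2Z := cls (g1⁻¹ * g0) with hx_def
  have hconj_mat : (g1⁻¹ * g0) * M * (g1⁻¹ * g0)⁻¹ = -Umat := by
    have h1 : g1⁻¹ * (g0 * M * g0⁻¹) * g1 = -Umat := by
      rw [hg0, ← hg1]; group
    rw [← h1]; group
  have hxu : x * u * x⁻¹ = cls Umat := by
    rw [hx_def, ← hMcls, ← cls_inv, ← cls_mul, ← cls_mul, hconj_mat, cls_neg]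
  refine ⟨x, ?_⟩
  set K := Subgroup.map (MulAut.conj x).toMonoidHom H with hK_def
  have hcardK : Nat.card K = 6 := by
    rw [← hH]
    exact (Nat.card_congr (H.equivMapOfInjective _ (MulAut.conj x).injective).toEquiv).symm
  have hmemU : cls Umat ∈ K := by
    refine ⟨u, u0.2, ?_⟩
    simpa [MulAut.conj_apply] using hxu
  set t : PGL2Z := x * (s0 : PGL2Z) * x⁻¹ with ht_def
  have hmemT : t ∈ K := ⟨(s0 : PGL2Z), s0.2, by simp [MulAut.conj_apply, ht_def]⟩
  have htord : orderOf t = 2 := by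
    have : t = (MulAut.conj x).toMonoidHom (s0 : PGL2Z) := by
      simp [MulAut.conj_apply, ht_def]
    rw [this, orderOf_injective _ (MulAut.conj x).injective,
      Subgroup.orderOf_coe, hs0]
  have ht2 : t^2 = 1 := by
    have h := pow_orderOf_eq_one t; rwa [htord] at h
  -- the conjugate t * [U] * t⁻¹ is a power of [U]
  haveI hfinK : Finite K := Nat.finite_of_card_ne_zero (by omega)
  set uK : K := ⟨cls Umat, hmemU⟩ with huK_def
  set tK : K := ⟨t, hmemT⟩ with htK_def
  have huKord : orderOf uK = 3 := by rw [huK_def, Subgroup.orderOf_mk]; exact clsU_order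
  set P : Subgroup K := Subgroup.zpowers uK with hP_def
  have hPcard : Nat.card P = 3 := by rw [hP_def, Nat.card_zpowers]; exact huKord
  have hPindex : P.index = 2 := by
    have hmul := P.card_mul_index
    rw [hPcard, hcardK] at hmul
    omega
  haveI hPnormal : P.Normal := index_two_normal P hPindex
  have hconjmem : tK * uK * tK⁻¹ ∈ P := hPnormal.conj_mem uK (Subgroup.mem_zpowers uK) tK
  obtain ⟨n, hn⟩ := Subgroup.mem_zpowers_iff.mp hconjmem
  have hnP : (cls Umat) ^ n = t * cls Umat * t⁻¹ := by
    have := congrArg Subtype.val hn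
    simpa [huK_def, htK_def] using this
  have hzmod := zpow_mod_orderOf (cls Umat) n
  rw [clsU_order] at hzmod
  push_cast at hzmod
  obtain ⟨MT, hMT⟩ : ∃ MT : GL2Z, cls MT = t := QuotientGroup.mk_surjective t
  have hbridge : cls (MT * Umat * MT⁻¹) = t * cls Umat * t⁻¹ := by
    rw [cls_mul, cls_mul, cls_inv, hMT]
  have hmod3 : n % 3 = 0 ∨ n % 3 = 1 ∨ n % 3 = 2 := by omega
  have hS_options : t = cls Smat ∨ t = cls (Smat * Umat) ∨ t = cls (Umat * Smat) := by
    rcases hmod3 with h' | h' | h'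
    · -- t u t⁻¹ = 1 : impossible
      exfalso
      have h1 : t * cls Umat * t⁻¹ = 1 := by
        rw [← hnP, ← hzmod, h', zpow_zero]
      have : cls Umat = 1 := by
        have := congrArg (fun z => t⁻¹ * z * t) h1
        simpa [mul_assoc] using this
      exact clsU_ne_one this
    · -- t commutes with [U] : impossible
      exfalso
      have h1 : t * cls Umat * t⁻¹ = cls Umat := by
        rw [← hnP, ← hzmod, h', zpow_one]
      have h2 : cls (MT * Umat * MT⁻¹) = cls Umat := by rw [hbridge, h1]
      rcases (cls_eq_iff _ _).mp h2 with h3 | h3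
      · -- MT commutes with Umat
        have h4 : MT * Umat = Umat * MT := by
          calc MT * Umat = (MT * Umat * MT⁻¹) * MT := by group
            _ = Umat * MT := by rw [h3]
        have h5 : MT.val * Umat.val = Umat.val * MT.val := by
          rw [← Units.val_mul, ← Units.val_mul, h4]
        rcases comm_case MT h5 with h6 | h6 | h6 | h6 | h6 | h6
        · rw [h6] at hMT
          rw [← hMT, show cls 1 = 1 from rfl, orderOf_one] at htord; norm_num at htord
        · rw [h6] at hMT
          have : t = 1 := by rw [← hMT, show (-1 : GL2Z) = -(1:GL2Z) from rfl, cls_neg]; rfl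
          rw [this, orderOf_one] at htord; norm_num at htord
        · rw [h6] at hMT
          rw [← hMT, clsU_order] at htord; norm_num at htord
        · rw [h6] at hMT
          rw [← hMT, cls_neg, clsU_order] at htord; norm_num at htord
        · rw [h6] at hMT
          have h7 : t = (cls Umat)^2 := by rw [← hMT, cls_pow]
          have h8 : cls Umat = 1 := by
            calc cls Umat = (cls Umat)^4 := by rw [show (4:ℕ) = 3 + 1 by norm_num, pow_add, clsU_cube, one_mul, pow_one]
              _ = t^2 := by rw [h7, ← pow_mul]
              _ = 1 := ht2
          exact clsU_ne_one h8
        · rw [h6] at hMT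
          have h7 : t = (cls Umat)^2 := by rw [← hMT, cls_neg, cls_pow]
          have h8 : cls Umat = 1 := by
            calc cls Umat = (cls Umat)^4 := by rw [show (4:ℕ) = 3 + 1 by norm_num, pow_add, clsU_cube, one_mul, pow_one]
              _ = t^2 := by rw [h7, ← pow_mul]
              _ = 1 := ht2
          exact clsU_ne_one h8
      · -- MT anticommutes with Umat
        have h4 : MT * Umat = (-Umat) * MT := by
          calc MT * Umat = (MT * Umat * MT⁻¹) * MT := by group
            _ = (-Umat) * MT := by rw [h3]
        have h5 : MT.val * Umat.val = -(Umat.val * MT.val) := by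
          rw [← Units.val_mul, h4, Units.val_mul, Units.val_neg, neg_mul]
        exact anticomm_case MT h5
    · -- t inverts [U]
      have h1 : t * cls Umat * t⁻¹ = (cls Umat)^2 := by
        rw [← hnP, ← hzmod, h', show (2:ℤ) = ((2:ℕ):ℤ) from rfl, zpow_natCast]
      have h2 : cls (MT * Umat * MT⁻¹) = cls (Umat^2) := by
        rw [hbridge, h1, cls_pow]
      rcases (cls_eq_iff _ _).mp h2 with h3 | h3
      · exfalso
        have h4 : MT * Umat = Umat^2 * MT := by
          calc MT * Umat = (MT * Umat * MT⁻¹) * MT := by group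
            _ = Umat^2 * MT := by rw [h3]
        have h5 : MT.val * Umat.val = (Umat^2).val * MT.val := by
          rw [← Units.val_mul, h4, Units.val_mul]
        exact invert_plus_case MT h5
      · have h4 : MT * Umat = (-(Umat^2)) * MT := by
          calc MT * Umat = (MT * Umat * MT⁻¹) * MT := by group
            _ = (-(Umat^2)) * MT := by rw [h3]
        have h5 : MT.val * Umat.val = -((Umat^2).val * MT.val) := by
          rw [← Units.val_mul, h4, Units.val_mul, Units.val_neg, neg_mul]
        rcases invert_minus_case MT h5 with h6 | h6 | h6 | h6 | h6 | h6
        · left; rw [← hMT, h6]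
        · left; rw [← hMT, h6, cls_neg]
        · right; left; rw [← hMT, h6]
        · right; left; rw [← hMT, h6, cls_neg]
        · right; right; rw [← hMT, h6]
        · right; right; rw [← hMT, h6, cls_neg]
  -- [S] ∈ K
  have hSinK : cls Smat ∈ K := by
    rcases hS_options with h' | h' | h'
    · rw [← h']; exact hmemT
    · have : cls Smat = t * (cls Umat)⁻¹ := by
        rw [h', cls_mul]; group
      rw [this]; exact K.mul_mem hmemT (K.inv_mem hmemU)
    · have : cls Smat = (cls Umat)⁻¹ * t := by
        rw [h', cls_mul]; group
      rw [this]; exact K.mul_mem (K.inv_mem hmemU) hmemT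
  -- conclude by cardinality
  have hle : Subgroup.closure {cls Umat, cls Smat} ≤ K := by
    rw [Subgroup.closure_le]
    rintro z hz
    rcases hz with rfl | hz
    · exact hmemU
    · rw [Set.mem_singleton_iff] at hz; rw [hz]; exact hSinK
  have hdvd6 : Nat.card (Subgroup.closure {cls Umat, cls Smat}) ∣ 6 := by
    rw [← hcardK]; exact Subgroup.card_dvd_of_le hle
  have h3dvd : 3 ∣ Nat.card (Subgroup.closure {cls Umat, cls Smat}) := by
    have h := Subgroup.orderOf_dvd_natCard (Subgroup.closure {cls Umat, cls Smat})
      (Subgroup.subset_closure (Set.mem_insert _ _))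
    rwa [clsU_order] at h
  have h2dvd : 2 ∣ Nat.card (Subgroup.closure {cls Umat, cls Smat}) := by
    have h := Subgroup.orderOf_dvd_natCard (Subgroup.closure {cls Umat, cls Smat})
      (Subgroup.subset_closure (Set.mem_insert_of_mem _ (Set.mem_singleton _)))
    rwa [clsS_order] at h
  have h6dvd : 6 ∣ Nat.card (Subgroup.closure {cls Umat, cls Smat}) := by
    have := Nat.Coprime.mul_dvd_of_dvd_of_dvd (by norm_num : Nat.Coprime 2 3) h2dvd h3dvd
    simpa using this
  have hcardG6 : Nat.card (Subgroup.closure {cls Umat, cls Smat}) = 6 :=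
    Nat.dvd_antisymm hdvd6 h6dvd
  exact (Subgroup.eq_of_le_of_card_ge hle (by rw [hcardK, hcardG6])).symm
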